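/- Let $D \subset \mathbb{R}^2$ be bounded and let $u \in C^2(\overline{D};\mathbb{R}^2)$, $\boldsymbol{F} \in C^1_c(D;\mathbb{R}^2)$. Then $\big(\int_D (f_\varepsilon(u), (\boldsymbol{F}\cdot\nabla)u)\,dx\big)^2 \leq C(\|\boldsymbol{F}\|_{C^1}, D)\, (E_\varepsilon(u))^2$, where $f_\varepsilon(u) = \Delta u + \varepsilon^{-2}(1-|u|^2)u$ and $E_\varepsilon(u)$ is the Ginzburg-Landau energy. -/

import Mathlib

/-!
With `e = e_ε(u)` and the stress–energy tensor `T_ik = ∂_i u · ∂_k u - δ_ik e`, symmetry of second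
derivatives gives `∂_i T_ik = (f_ε(u), ∂_k u)`, hence
`(f_ε(u), (F·∇)u) = div (T F) + e div F - ∇F : (∇u ⊗ ∇u)`.
The field `T F` is `C¹` with compact support in `D`, so its divergence integrates to zero, while the
last two terms are bounded pointwise by `6 ‖DF‖_∞ e` because `|∇u|² ≤ 2e`.
-/

open MeasureTheory

noncomputable def pd (f : (Fin 2 → ℝ) → ℝ) (i : Fin 2) (x : Fin 2 → ℝ) : ℝ :=
  fderiv ℝ f x (Pi.single i 1)

section Integration

variable {E : Type*} [NormedAddCommGroup E] [NormedSpace ℝ E] [FiniteDimensional ℝ E]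
  [MeasurableSpace E] [BorelSpace E] {μ : Measure E} [μ.IsAddHaarMeasure]
  {g : E → ℝ}

theorem integral_fderiv_apply_eq_zero (hg : ContDiff ℝ 1 g) (hgc : HasCompactSupport g) (v : E) :
    ∫ x, fderiv ℝ g x v ∂μ = 0 := by
  have hdg : Continuous fun x => fderiv ℝ g x v :=
    (hg.continuous_fderiv one_ne_zero).clm_apply continuous_const
  have h := integral_mul_fderiv_eq_neg_fderiv_mul_of_integrable (μ := μ) (f := fun _ => (1 : ℝ))
    (g := g) (v := v) (by simp)
    (by simpa using hdg.integrable_of_hasCompactSupport (hgc.fderiv_apply ℝ v))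
    (by simpa using hg.continuous.integrable_of_hasCompactSupport hgc)
    (fun _ _ => differentiableAt_const _) (fun x _ => hg.differentiable one_ne_zero x)
  simpa using h

theorem setIntegral_fderiv_apply_eq_zero {D : Set E} (hg : ContDiff ℝ 1 g)
    (hgc : HasCompactSupport g) (hgD : tsupport g ⊆ D) (v : E) :
    ∫ x in D, fderiv ℝ g x v ∂μ = 0 := by
  rw [setIntegral_eq_integral_of_forall_compl_eq_zero fun x hx => by
    simp [fderiv_of_notMem_tsupport ℝ (fun h => hx (hgD h))]]
  exact integral_fderiv_apply_eq_zero hg hgc v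

end Integration

theorem abs_sum_sum_mul_mul_le {ι : Type*} [Fintype ι] {M : ι → ι → ℝ} {B : ℝ}
    (hM : ∀ i l, |M i l| ≤ B) (a : ι → ℝ) :
    |∑ i, ∑ l, M i l * a l * a i| ≤ B * (∑ i, |a i|) ^ 2 := by
  calc |∑ i, ∑ l, M i l * a l * a i| ≤ ∑ i, ∑ l, B * (|a l| * |a i|) := by
        refine (Finset.abs_sum_le_sum_abs _ _).trans (Finset.sum_le_sum fun i _ => ?_)
        refine (Finset.abs_sum_le_sum_abs _ _).trans (Finset.sum_le_sum fun l _ => ?_)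
        rw [abs_mul, abs_mul, mul_assoc]
        exact mul_le_mul_of_nonneg_right (hM i l) (by positivity)
    _ = B * (∑ i, |a i|) ^ 2 := by
        rw [sq, Fintype.sum_mul_sum, Finset.mul_sum, Finset.sum_comm]
        simp only [Finset.mul_sum]

section PartialDerivatives

variable {f g : (Fin 2 → ℝ) → ℝ} {i : Fin 2} {x : Fin 2 → ℝ}

theorem pd_const (c : ℝ) : pd (fun _ => c) i x = 0 := by simp [pd]

theorem pd_add (hf : DifferentiableAt ℝ f x) (hg : DifferentiableAt ℝ g x) :
    pd (fun y => f y + g y) i x = pd f i x + pd g i x := by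
  simp [pd, fderiv_fun_add hf hg]

theorem pd_sub (hf : DifferentiableAt ℝ f x) (hg : DifferentiableAt ℝ g x) :
    pd (fun y => f y - g y) i x = pd f i x - pd g i x := by
  simp [pd, fderiv_fun_sub hf hg]

theorem pd_sum {ι : Type*} (s : Finset ι) {φ : ι → (Fin 2 → ℝ) → ℝ}
    (hφ : ∀ k ∈ s, DifferentiableAt ℝ (φ k) x) :
    pd (fun y => ∑ k ∈ s, φ k y) i x = ∑ k ∈ s, pd (φ k) i x := by
  simp [pd, fderiv_fun_sum hφ]

theorem pd_mul (hf : DifferentiableAt ℝ f x) (hg : DifferentiableAt ℝ g x) :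
    pd (fun y => f y * g y) i x = pd f i x * g x + f x * pd g i x := by
  simp [pd, fderiv_fun_mul hf hg]
  ring

theorem pd_pow_two (hf : DifferentiableAt ℝ f x) :
    pd (fun y => f y ^ 2) i x = 2 * f x * pd f i x := by
  simp only [sq]
  rw [pd_mul hf hf]
  ring

theorem contDiff_pd {n : ℕ} (hf : ContDiff ℝ (n + 1) f) (i : Fin 2) : ContDiff ℝ n (pd f i) :=
  (hf.fderiv_right le_rfl).clm_apply contDiff_const

theorem pd_pd_eq_fderiv_fderiv (hf : ContDiff ℝ 2 f) (i j : Fin 2) :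
    pd (pd f i) j x = fderiv ℝ (fderiv ℝ f) x (Pi.single j 1) (Pi.single i 1) := by
  have hdf : Differentiable ℝ (fderiv ℝ f) :=
    (hf.fderiv_right (m := 1) le_rfl).differentiable one_ne_zero
  change fderiv ℝ (fun y => fderiv ℝ f y (Pi.single i 1)) x (Pi.single j 1) = _
  simp [fderiv_clm_apply (hdf x) (differentiableAt_const _)]

theorem pd_pd_comm (hf : ContDiff ℝ 2 f) (i j : Fin 2) : pd (pd f i) j x = pd (pd f j) i x := by
  rw [pd_pd_eq_fderiv_fderiv hf, pd_pd_eq_fderiv_fderiv hf,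
    (hf.contDiffAt.isSymmSndFDerivAt (by simp)).eq]

end PartialDerivatives

theorem exists_bound_abs_pd {F : (Fin 2 → ℝ) → Fin 2 → ℝ} (hF : ContDiff ℝ 1 F)
    (hFc : HasCompactSupport F) : ∃ B, ∀ i l x, |pd (fun y => F y l) i x| ≤ B := by
  obtain ⟨B, hB⟩ :=
    (hF.continuous_fderiv one_ne_zero).bounded_above_of_compact_support (hFc.fderiv ℝ)
  refine ⟨B, fun i l x => ?_⟩
  have hpd : pd (fun y => F y l) i x = fderiv ℝ F x (Pi.single i 1) l := by
    simp [pd, fderiv_apply ((hF.differentiable one_ne_zero) x)]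
  calc |pd (fun y => F y l) i x| ≤ ‖fderiv ℝ F x (Pi.single i 1)‖ := by
        rw [hpd, ← Real.norm_eq_abs]
        exact norm_le_pi_norm _ l
    _ ≤ ‖fderiv ℝ F x‖ * ‖(Pi.single i 1 : Fin 2 → ℝ)‖ := (fderiv ℝ F x).le_opNorm _
    _ ≤ B := by simpa [Pi.norm_single] using hB x

noncomputable def glEnergyDensity (ε : ℝ) (u : (Fin 2 → ℝ) → Fin 2 → ℝ) (x : Fin 2 → ℝ) : ℝ :=
  (1 / 2) * ∑ j : Fin 2, ∑ k : Fin 2, (pd (fun y => u y k) j x) ^ 2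
    + (1 / (4 * ε ^ 2)) * (1 - ∑ i : Fin 2, (u x i) ^ 2) ^ 2

/-- The `j`-th component of `f_ε(u) = Δu + ε⁻²(1 - |u|²)u`. -/
noncomputable abbrev glOperator (ε : ℝ) (u : (Fin 2 → ℝ) → Fin 2 → ℝ) (j : Fin 2) (x : Fin 2 → ℝ) : ℝ :=
  (∑ k : Fin 2, pd (pd (fun y => u y j) k) k x)
    + (1 / ε ^ 2) * (1 - ∑ i : Fin 2, (u x i) ^ 2) * u x j

/-- The `i`-th component of `T F`, where `T_ik = ∂_i u · ∂_k u - δ_ik e_ε(u)`. -/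
noncomputable def glFlux (ε : ℝ) (u F : (Fin 2 → ℝ) → Fin 2 → ℝ) (i : Fin 2)
    (x : Fin 2 → ℝ) : ℝ :=
  ∑ j : Fin 2, pd (fun y => u y j) i x * ∑ l : Fin 2, F x l * pd (fun y => u y j) l x
    - F x i * glEnergyDensity ε u x

noncomputable def glRemainder (ε : ℝ) (u F : (Fin 2 → ℝ) → Fin 2 → ℝ) (x : Fin 2 → ℝ) : ℝ :=
  (∑ i : Fin 2, pd (fun y => F y i) i x) * glEnergyDensity ε u x
    - ∑ j : Fin 2, ∑ i : Fin 2, ∑ l : Fin 2,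
        pd (fun y => F y l) i x * pd (fun y => u y j) l x * pd (fun y => u y j) i x

section GinzburgLandau

variable {ε : ℝ} {u F : (Fin 2 → ℝ) → Fin 2 → ℝ}

theorem sum_glOperator_mul_eq_div_glFlux_add_glRemainder (hF : ContDiff ℝ 1 F)
    (hu : ContDiff ℝ 2 u) (ε : ℝ) (x : Fin 2 → ℝ) :
    ∑ j : Fin 2, glOperator ε u j x * ∑ k : Fin 2, F x k * pd (fun y => u y j) k x
      = ∑ i : Fin 2, pd (glFlux ε u F i) i x + glRemainder ε u F x := by
  have huj : ∀ j, ContDiff ℝ 2 (fun y => u y j) := contDiff_pi.mp hu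
  have hu1 : ∀ j, Differentiable ℝ (fun y => u y j) :=
    fun j => (huj j).differentiable two_ne_zero
  have hdu : ∀ j k, Differentiable ℝ (pd (fun y => u y j) k) :=
    fun j k => (contDiff_pd (n := 1) (huj j) k).differentiable one_ne_zero
  have hdF : ∀ l, Differentiable ℝ (fun y => F y l) :=
    fun l => ((contDiff_pi.mp hF) l).differentiable one_ne_zero
  unfold glFlux glEnergyDensity
  simp (disch := fun_prop) only [pd_sub, pd_add, pd_mul, pd_sum, pd_pow_two, pd_const]
  simp only [glOperator, glRemainder, glEnergyDensity, Fin.sum_univ_two, Fin.isValue]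
  rw [pd_pd_comm (huj 0) 1 0, pd_pd_comm (huj 1) 1 0]
  ring

theorem glEnergyDensity_nonneg (ε : ℝ) (u : (Fin 2 → ℝ) → Fin 2 → ℝ) (x : Fin 2 → ℝ) :
    0 ≤ glEnergyDensity ε u x := by
  unfold glEnergyDensity
  positivity

theorem sum_sq_pd_le_two_mul_glEnergyDensity (ε : ℝ) (u : (Fin 2 → ℝ) → Fin 2 → ℝ)
    (x : Fin 2 → ℝ) :
    ∑ j : Fin 2, ∑ i : Fin 2, pd (fun y => u y j) i x ^ 2 ≤ 2 * glEnergyDensity ε u x := by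
  have : 0 ≤ 1 / (4 * ε ^ 2) * (1 - ∑ i : Fin 2, u x i ^ 2) ^ 2 := by positivity
  unfold glEnergyDensity
  rw [Finset.sum_comm]
  linarith

theorem abs_glRemainder_le {B : ℝ} {x : Fin 2 → ℝ}
    (hB : ∀ i l, |pd (fun y => F y l) i x| ≤ B) :
    |glRemainder ε u F x| ≤ 6 * B * glEnergyDensity ε u x := by
  have he := glEnergyDensity_nonneg ε u x
  have hB0 : 0 ≤ B := (abs_nonneg _).trans (hB 0 0)
  have hdiv : |∑ i : Fin 2, pd (fun y => F y i) i x| ≤ 2 * B := by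
    simpa [Fin.sum_univ_two, two_mul] using
      (abs_add_le _ _).trans (add_le_add (hB 0 0) (hB 1 1))
  have hquad : ∀ j : Fin 2, |∑ i : Fin 2, ∑ l : Fin 2,
      pd (fun y => F y l) i x * pd (fun y => u y j) l x * pd (fun y => u y j) i x|
        ≤ 2 * B * ∑ i : Fin 2, pd (fun y => u y j) i x ^ 2 := by
    intro j
    have hCS : (∑ i : Fin 2, |pd (fun y => u y j) i x|) ^ 2
        ≤ 2 * ∑ i : Fin 2, pd (fun y => u y j) i x ^ 2 := by
      simpa using sq_sum_le_card_mul_sum_sq (s := Finset.univ)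
        (f := fun i : Fin 2 => |pd (fun y => u y j) i x|)
    calc _ ≤ B * (∑ i : Fin 2, |pd (fun y => u y j) i x|) ^ 2 := abs_sum_sum_mul_mul_le hB _
      _ ≤ 2 * B * ∑ i : Fin 2, pd (fun y => u y j) i x ^ 2 :=
        (mul_le_mul_of_nonneg_left hCS hB0).trans_eq (by ring)
  have hgrad := mul_le_mul_of_nonneg_left (sum_sq_pd_le_two_mul_glEnergyDensity ε u x) hB0
  calc |glRemainder ε u F x|
      ≤ |(∑ i : Fin 2, pd (fun y => F y i) i x) * glEnergyDensity ε u x|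
        + |∑ j : Fin 2, ∑ i : Fin 2, ∑ l : Fin 2,
            pd (fun y => F y l) i x * pd (fun y => u y j) l x * pd (fun y => u y j) i x| :=
        abs_sub _ _
    _ ≤ 2 * B * glEnergyDensity ε u x
        + ∑ j : Fin 2, 2 * B * ∑ i : Fin 2, pd (fun y => u y j) i x ^ 2 := by
        gcongr
        · rw [abs_mul, abs_of_nonneg he]
          gcongr
        · exact (Finset.abs_sum_le_sum_abs _ _).trans (Finset.sum_le_sum fun j _ => hquad j)
    _ ≤ 6 * B * glEnergyDensity ε u x := by
        rw [← Finset.mul_sum]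
        linarith

theorem contDiff_glEnergyDensity (hu : ContDiff ℝ 2 u) : ContDiff ℝ 1 (glEnergyDensity ε u) := by
  have huj : ∀ j, ContDiff ℝ 2 (fun y => u y j) := contDiff_pi.mp hu
  have hu1 : ∀ j, ContDiff ℝ 1 (fun y => u y j) := fun j => (huj j).of_le one_le_two
  have hdu : ∀ j k, ContDiff ℝ 1 (pd (fun y => u y j) k) := fun j k => contDiff_pd (huj j) k
  unfold glEnergyDensity
  fun_prop

theorem contDiff_glFlux (hF : ContDiff ℝ 1 F) (hu : ContDiff ℝ 2 u) (i : Fin 2) :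
    ContDiff ℝ 1 (glFlux ε u F i) := by
  have hdu : ∀ j k, ContDiff ℝ 1 (pd (fun y => u y j) k) :=
    fun j k => contDiff_pd (contDiff_pi.mp hu j) k
  have hFl : ∀ l, ContDiff ℝ 1 (fun y => F y l) := contDiff_pi.mp hF
  have he := contDiff_glEnergyDensity (ε := ε) hu
  unfold glFlux
  fun_prop

theorem support_glFlux_subset (i : Fin 2) :
    Function.support (glFlux ε u F i) ⊆ Function.support F := by
  intro x hx
  contrapose! hx
  rw [Function.notMem_support] at hx ⊢
  simp [glFlux, hx]

theorem continuous_glRemainder (hF : ContDiff ℝ 1 F) (hu : ContDiff ℝ 2 u) :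
    Continuous (glRemainder ε u F) := by
  have hdu : ∀ j k, Continuous (pd (fun y => u y j) k) :=
    fun j k => (contDiff_pd (contDiff_pi.mp hu j) k).continuous
  have hdF : ∀ i l, Continuous (pd (fun y => F y l) i) :=
    fun i l => (contDiff_pd (n := 0) (contDiff_pi.mp hF l) i).continuous
  have he := (contDiff_glEnergyDensity (ε := ε) hu).continuous
  unfold glRemainder
  fun_prop

end GinzburgLandau

theorem stmt15_general (D : Set (Fin 2 → ℝ)) (hDb : Bornology.IsBounded D)
    (F : (Fin 2 → ℝ) → Fin 2 → ℝ) (hF : ContDiff ℝ 1 F)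
    (hFc : HasCompactSupport F) (hFsupp : tsupport F ⊆ D) :
    ∃ C : ℝ, ∀ ε : ℝ, 0 < ε → ∀ u : (Fin 2 → ℝ) → Fin 2 → ℝ, ContDiff ℝ 2 u →
      (∫ x in D, ∑ j : Fin 2,
          ((∑ k : Fin 2, pd (pd (fun y => u y j) k) k x)
              + (1 / ε ^ 2) * (1 - ∑ i : Fin 2, (u x i) ^ 2) * u x j)
            * (∑ k : Fin 2, F x k * pd (fun y => u y j) k x)) ^ 2
        ≤ C * (∫ x in D,
            (1 / 2) * ∑ j : Fin 2, ∑ k : Fin 2, (pd (fun y => u y k) j x) ^ 2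
              + (1 / (4 * ε ^ 2)) * (1 - ∑ i : Fin 2, (u x i) ^ 2) ^ 2) ^ 2 := by
  obtain ⟨B, hB⟩ := exists_bound_abs_pd hF hFc
  refine ⟨(6 * B) ^ 2, fun ε _ u hu => ?_⟩
  have hint : ∀ g : (Fin 2 → ℝ) → ℝ, Continuous g → IntegrableOn g D := fun g hg =>
    (hg.continuousOn.integrableOn_compact hDb.isCompact_closure).mono_set subset_closure
  have hflux (i : Fin 2) :
      IntegrableOn (pd (glFlux ε u F i) i) D ∧ ∫ x in D, pd (glFlux ε u F i) i x = 0 := by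
    have hW := contDiff_glFlux (ε := ε) hF hu i
    exact ⟨hint _ (contDiff_pd (n := 0) hW i).continuous,
      setIntegral_fderiv_apply_eq_zero hW (hFc.mono (support_glFlux_subset i))
        ((closure_mono (support_glFlux_subset i)).trans hFsupp) _⟩
  have hR : |∫ x in D, glRemainder ε u F x| ≤ 6 * B * ∫ x in D, glEnergyDensity ε u x := by
    rw [← integral_const_mul, ← Real.norm_eq_abs]
    exact norm_integral_le_of_norm_le
      ((hint _ (contDiff_glEnergyDensity hu).continuous).const_mul _)
      (ae_of_all _ fun x => abs_glRemainder_le (hB · · x))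
  simp_rw [sum_glOperator_mul_eq_div_glFlux_add_glRemainder hF hu ε]
  rw [integral_add (integrable_finsetSum _ fun i _ => (hflux i).1)
      (hint _ (continuous_glRemainder hF hu)), integral_finsetSum _ fun i _ => (hflux i).1,
    Finset.sum_eq_zero fun i _ => (hflux i).2, zero_add, ← sq_abs]
  exact (pow_le_pow_left₀ (abs_nonneg _) hR 2).trans_eq (mul_pow _ _ _)

/-- For bounded `D ⊆ ℝ²` and `F ∈ C¹_c(D;ℝ²)` there is `C = C(‖F‖_{C¹}, D)` with
`(∫_D (f_ε(u), (F·∇)u) dx)² ≤ C (E_ε(u))²` for all `ε > 0` and `u ∈ C²(D̄;ℝ²)`. -/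
theorem stmt15 (D : Set (Fin 2 → ℝ)) (hD : IsOpen D) (hDb : Bornology.IsBounded D)
    (F : (Fin 2 → ℝ) → Fin 2 → ℝ) (hF : ContDiff ℝ 1 F)
    (hFc : HasCompactSupport F) (hFsupp : tsupport F ⊆ D) :
    ∃ C : ℝ, ∀ ε : ℝ, 0 < ε → ∀ u : (Fin 2 → ℝ) → Fin 2 → ℝ, ContDiff ℝ 2 u →
      (∫ x in D, ∑ j : Fin 2,
          ((∑ k : Fin 2, pd (pd (fun y => u y j) k) k x)
              + (1 / ε ^ 2) * (1 - ∑ i : Fin 2, (u x i) ^ 2) * u x j)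
            * (∑ k : Fin 2, F x k * pd (fun y => u y j) k x)) ^ 2
        ≤ C * (∫ x in D,
            (1 / 2) * ∑ j : Fin 2, ∑ k : Fin 2, (pd (fun y => u y k) j x) ^ 2
              + (1 / (4 * ε ^ 2)) * (1 - ∑ i : Fin 2, (u x i) ^ 2) ^ 2) ^ 2 :=
  stmt15_general D hDb F hF hFc hFsupp
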